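/- arXiv:2411.02055 — 3 statements merged into one kernel-verified Lean document; each statement's English description precedes it below -/
import Mathlib

section
/- For every z > 0 and every ν ≥ 1, defining C(K_ν(z)) = -z K_ν'(z)/K_ν(z), one has √((ν - 1/2)² + z²) + 1/2 < C(K_ν(z)) < √((ν - 1)² + z²) + 1. -/
open Real MeasureTheory

/-- Modified Bessel function of the first kind of real order ν (Schläfli's
integral representation, valid for z > 0). -/
noncomputable def besselI (ν z : ℝ) : ℝ :=
  (1 / π) * ∫ θ in (0:ℝ)..π, Real.exp (z * Real.cos θ) * Real.cos (ν * θ)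
    - (Real.sin (ν * π) / π) *
      ∫ t in Set.Ioi (0:ℝ), Real.exp (-(z * Real.cosh t) - ν * t)

/-- Modified Bessel function of the second kind of real order ν
(Basset's integral representation, valid for z > 0). -/
noncomputable def besselK (ν z : ℝ) : ℝ :=
  ∫ t in Set.Ioi (0:ℝ), Real.exp (-(z * Real.cosh t)) * Real.cosh (ν * t)

/-!
With `K₁ = -K_ν'`, the ratio `C = z K₁ / K_ν` satisfies the Riccati equation
`z C' = C² - z² - ν²`, a rewriting of the Bessel equation. For `u = √(a² + z²) + b` the function
`h = u K_ν - z K₁ = K_ν (u - C)` satisfies `h' = (u / z) h + K_ν (u' + (z² + ν² - u²) / z)`, so with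
`Φ' = u / z` the function `e^{-Φ} h` is monotone, in the direction given by the sign of the defect
`u' + (z² + ν² - u²) / z`. It tends to `0` at infinity, since `e^{-Φ} (u + z)` stays bounded while
`K_ν, K₁ = O(e^{-z})`; hence `h` has the sign opposite to the defect. For `(a, b) = (ν - 1/2, 1/2)`
the defect is positive, giving `u < C`; for `(a, b) = (ν - 1, 1)` it is negative, giving `C < u`.
-/

open Set Filter Topology

lemma sq_div_four_le_cosh {t : ℝ} (ht : 0 ≤ t) : t ^ 2 / 4 ≤ cosh t := by
  have := quadratic_le_exp_of_nonneg ht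
  have := exp_pos (-t)
  rw [cosh_eq]
  nlinarith

lemma cosh_le_exp_abs (t : ℝ) : cosh t ≤ exp |t| := by
  rw [← cosh_abs, cosh_eq]
  linarith [exp_le_exp.2 (neg_le_self (abs_nonneg t))]

lemma integrableOn_exp_neg_mul_cosh_mul_exp {z : ℝ} (hz : 0 < z) (c : ℝ) :
    IntegrableOn (fun t => exp (-(z * cosh t)) * exp (c * t)) (Ioi 0) := by
  -- `-z cosh t + c t ≤ -z t² / 4 + c t ≤ 2 c² / z - z t² / 8`: a Gaussian bound
  refine (((integrable_exp_neg_mul_sq (b := z / 8) (by positivity)).const_mul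
    (exp (2 * c ^ 2 / z))).integrableOn).mono' (by fun_prop) ?_
  filter_upwards [self_mem_ae_restrict measurableSet_Ioi] with t (ht : 0 < t)
  have hsq : 0 ≤ z / 8 * (t - 4 * c / z) ^ 2 := by positivity
  have hct : c * t ≤ z / 8 * t ^ 2 + 2 * c ^ 2 / z := by
    field_simp at hsq ⊢; nlinarith
  have hcosh := mul_le_mul_of_nonneg_left (sq_div_four_le_cosh ht.le) hz.le
  rw [norm_of_nonneg (by positivity), ← exp_add, ← exp_add]
  exact exp_le_exp.2 (by linarith)

/-- `(-1)ⁿ Mₙ` is the `n`-th derivative of `K_ν`. -/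
noncomputable def besselKMoment (n : ℕ) (ν z : ℝ) : ℝ :=
  ∫ t in Ioi 0, exp (-(z * cosh t)) * (cosh t ^ n * cosh (ν * t))

lemma besselK_eq_besselKMoment_zero (ν : ℝ) : besselK ν = besselKMoment 0 ν := by
  ext z
  simp [besselK, besselKMoment]

lemma integrableOn_besselKMoment (n : ℕ) (ν : ℝ) {z : ℝ} (hz : 0 < z) :
    IntegrableOn (fun t => exp (-(z * cosh t)) * (cosh t ^ n * cosh (ν * t))) (Ioi 0) := by
  refine (integrableOn_exp_neg_mul_cosh_mul_exp hz (n + |ν|)).mono' (by fun_prop) ?_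
  filter_upwards [self_mem_ae_restrict measurableSet_Ioi] with t (ht : 0 < t)
  have hn : cosh t ^ n ≤ exp (n * t) := by
    rw [exp_nat_mul]
    exact pow_le_pow_left₀ (cosh_pos t).le ((cosh_le_exp_abs t).trans_eq (by rw [abs_of_pos ht])) n
  have hν : cosh (ν * t) ≤ exp (|ν| * t) := by
    simpa [abs_mul, abs_of_pos ht] using cosh_le_exp_abs (ν * t)
  rw [norm_of_nonneg (by positivity), add_mul, exp_add]
  gcongr

lemma hasDerivAt_besselKMoment (n : ℕ) (ν : ℝ) {z : ℝ} (hz : 0 < z) :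
    HasDerivAt (besselKMoment n ν) (-besselKMoment (n + 1) ν z) z := by
  have hball : Metric.ball z (z / 2) ∈ 𝓝 z := Metric.ball_mem_nhds z (by positivity)
  -- near `z`, the `x`-derivative is dominated by the integrand of `M_{n+1}` at `z / 2`
  have key := hasDerivAt_integral_of_dominated_loc_of_deriv_le
    (μ := volume.restrict (Ioi 0)) (x₀ := z)
    (F := fun x t => exp (-(x * cosh t)) * (cosh t ^ n * cosh (ν * t)))
    (F' := fun x t => -(exp (-(x * cosh t)) * (cosh t ^ (n + 1) * cosh (ν * t))))
    hball (.of_forall fun x => by fun_prop) (integrableOn_besselKMoment n ν hz) (by fun_prop)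
    ?_ (integrableOn_besselKMoment (n + 1) ν (half_pos hz)) ?_
  · rw [besselKMoment, ← integral_neg]
    exact key.2
  · refine .of_forall fun t x hx => ?_
    have hx : z / 2 < x := by
      rw [Metric.mem_ball, Real.dist_eq, abs_lt] at hx; linarith
    rw [norm_neg, norm_of_nonneg (by positivity)]
    gcongr
  · refine .of_forall fun t x _ => ?_
    refine ((((hasDerivAt_id x).mul_const (cosh t)).neg.exp).mul_const
      (cosh t ^ n * cosh (ν * t))).congr_deriv ?_
    simp only [id, Pi.neg_apply, pow_succ]; ring

lemma besselKMoment_pos (n : ℕ) (ν : ℝ) {z : ℝ} (hz : 0 < z) : 0 < besselKMoment n ν z := by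
  rw [besselKMoment, setIntegral_pos_iff_support_of_nonneg_ae
    (.of_forall fun t => by positivity) (integrableOn_besselKMoment n ν hz)]
  have : (Function.support fun t => exp (-(z * cosh t)) * (cosh t ^ n * cosh (ν * t))) = univ :=
    Function.support_eq_univ fun t => by positivity
  simp [this]

lemma hasDerivAt_besselK (ν : ℝ) {z : ℝ} (hz : 0 < z) :
    HasDerivAt (besselK ν) (-besselKMoment 1 ν z) z := by
  rw [besselK_eq_besselKMoment_zero]
  exact hasDerivAt_besselKMoment 0 ν hz

lemma besselK_pos (ν : ℝ) {z : ℝ} (hz : 0 < z) : 0 < besselK ν z :=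
  besselK_eq_besselKMoment_zero ν ▸ besselKMoment_pos 0 ν hz

lemma besselKMoment_le_succ (n : ℕ) (ν : ℝ) {z : ℝ} (hz : 0 < z) :
    besselKMoment n ν z ≤ besselKMoment (n + 1) ν z := by
  refine setIntegral_mono_on (integrableOn_besselKMoment n ν hz)
    (integrableOn_besselKMoment (n + 1) ν hz) measurableSet_Ioi fun t _ => ?_
  rw [pow_succ]
  gcongr
  exact le_mul_of_one_le_right (by positivity) (one_le_cosh t)

lemma besselKMoment_le_exp_sub_mul (n : ℕ) (ν : ℝ) {y z : ℝ} (hy : 0 < y) (hyz : y ≤ z) :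
    besselKMoment n ν z ≤ exp (y - z) * besselKMoment n ν y := by
  rw [besselKMoment, besselKMoment, ← integral_const_mul]
  refine setIntegral_mono_on (integrableOn_besselKMoment n ν (hy.trans_le hyz))
    ((integrableOn_besselKMoment n ν hy).const_mul _) measurableSet_Ioi fun t _ => ?_
  have hc := one_le_cosh t
  have : exp (-(z * cosh t)) ≤ exp (y - z) * exp (-(y * cosh t)) := by
    rw [← exp_add]; exact exp_le_exp.2 (by nlinarith)
  rw [← mul_assoc (exp (y - z))]
  exact mul_le_mul_of_nonneg_right this (by positivity)

lemma abs_sinh_le_cosh (x : ℝ) : |sinh x| ≤ cosh x := by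
  rw [abs_sinh, ← cosh_abs x]
  exact (sinh_lt_cosh _).le

lemma besselKMoment_bessel_equation (ν : ℝ) {z : ℝ} (hz : 0 < z) :
    z ^ 2 * besselKMoment 2 ν z =
      z * besselKMoment 1 ν z + (z ^ 2 + ν ^ 2) * besselKMoment 0 ν z := by
  set g : ℕ → ℝ → ℝ := fun n t => exp (-(z * cosh t)) * (cosh t ^ n * cosh (ν * t))
  have hg : ∀ n, IntegrableOn (g n) (Ioi 0) := fun n => integrableOn_besselKMoment n ν hz
  -- the boundary term of the integration by parts
  set F : ℝ → ℝ := fun t => exp (-(z * cosh t)) * (z * sinh t * cosh (ν * t) + ν * sinh (ν * t))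
  set F' : ℝ → ℝ := fun t => z * g 1 t + (z ^ 2 + ν ^ 2) * g 0 t - z ^ 2 * g 2 t
  have hF : ∀ t, HasDerivAt F (F' t) t := fun t => by
    have hνt : HasDerivAt (fun s => ν * s) ν t := by simpa using (hasDerivAt_id t).const_mul ν
    refine ((((hasDerivAt_cosh t).const_mul z).neg.exp).mul
      ((((hasDerivAt_sinh t).const_mul z).mul hνt.cosh).add (hνt.sinh.const_mul ν))).congr_deriv ?_
    have := cosh_sq t
    simp only [F', g, Pi.neg_apply, Pi.add_apply, Pi.mul_apply]
    linear_combination z ^ 2 * exp (-(z * cosh t)) * cosh (ν * t) * this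
  have hF'int : IntegrableOn F' (Ioi 0) :=
    ((((hg 1).const_mul z).add ((hg 0).const_mul _))).sub ((hg 2).const_mul _)
  have hFint : IntegrableOn F (Ioi 0) := by
    refine (((hg 1).const_mul z).add ((hg 0).const_mul |ν|)).mono' (by fun_prop)
      (.of_forall fun t => ?_)
    have hc := cosh_pos (ν * t)
    simp only [g, pow_one, pow_zero, one_mul, F, norm_mul, norm_of_nonneg (exp_pos _).le]
    calc exp (-(z * cosh t)) * ‖z * sinh t * cosh (ν * t) + ν * sinh (ν * t)‖
        ≤ exp (-(z * cosh t)) * (z * cosh t * cosh (ν * t) + |ν| * cosh (ν * t)) := by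
          gcongr
          refine (norm_add_le _ _).trans (add_le_add ?_ ?_) <;>
            simp only [norm_mul, Real.norm_eq_abs, abs_of_pos hz, abs_of_pos hc]
          · gcongr; exact abs_sinh_le_cosh t
          · gcongr; exact abs_sinh_le_cosh _
      _ = _ := by simp only [Pi.add_apply]; ring
  have hlim : Tendsto F atTop (𝓝 0) :=
    tendsto_zero_of_hasDerivAt_of_integrableOn_Ioi (fun t _ => hF t) hF'int hFint
  have hibp := integral_Ioi_of_hasDerivAt_of_tendsto' (fun t _ => hF t) hF'int hlim
  simp only [F, F', sinh_zero, mul_zero, zero_mul, add_zero, sub_zero] at hibp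
  rw [integral_sub, integral_add, integral_const_mul, integral_const_mul, integral_const_mul]
    at hibp
  · simp only [besselKMoment]; linarith
  · exact (hg 1).const_mul z
  · exact (hg 0).const_mul _
  · exact ((hg 1).const_mul z).add ((hg 0).const_mul _)
  · exact (hg 2).const_mul _

/-- `e^{-φ} h` is strictly increasing. -/
lemma neg_of_hasDerivAt_eq_mul_add_pos {a : ℝ} {φ φ' h r : ℝ → ℝ}
    (hφ : ∀ x ∈ Ioi a, HasDerivAt φ (φ' x) x)
    (hh : ∀ x ∈ Ioi a, HasDerivAt h (φ' x * h x + r x) x) (hr : ∀ x ∈ Ioi a, 0 < r x)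
    (hlim : Tendsto (fun x => exp (-φ x) * h x) atTop (𝓝 0)) {x : ℝ} (hx : a < x) : h x < 0 := by
  set G := fun x => exp (-φ x) * h x
  have hG : ∀ y ∈ Ioi a, HasDerivAt G (exp (-φ y) * r y) y := fun y hy => by
    refine (((hφ y hy).neg.exp).mul (hh y hy)).congr_deriv ?_
    simp only [Pi.neg_apply]; ring
  have hmono : StrictMonoOn G (Ioi a) := by
    refine strictMonoOn_of_deriv_pos (convex_Ioi a)
      (fun y hy => (hG y hy).continuousAt.continuousWithinAt) fun y hy => ?_
    rw [interior_Ioi] at hy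
    rw [(hG y hy).deriv]
    exact mul_pos (exp_pos _) (hr y hy)
  have hxa : x + 1 ∈ Ioi a := mem_Ioi.2 (by linarith)
  have hG1 : G (x + 1) ≤ 0 :=
    ge_of_tendsto hlim <| (eventually_ge_atTop (x + 1)).mono fun y hy =>
      hmono.monotoneOn hxa (mem_Ioi.2 (by linarith [mem_Ioi.1 hxa])) hy
  have hGx : G x < 0 := (hmono hx hxa (by linarith)).trans_le hG1
  exact neg_of_mul_neg_right hGx (exp_pos _).le

lemma pos_of_hasDerivAt_eq_mul_add_neg {a : ℝ} {φ φ' h r : ℝ → ℝ}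
    (hφ : ∀ x ∈ Ioi a, HasDerivAt φ (φ' x) x)
    (hh : ∀ x ∈ Ioi a, HasDerivAt h (φ' x * h x + r x) x) (hr : ∀ x ∈ Ioi a, r x < 0)
    (hlim : Tendsto (fun x => exp (-φ x) * h x) atTop (𝓝 0)) {x : ℝ} (hx : a < x) : 0 < h x := by
  have := neg_of_hasDerivAt_eq_mul_add_pos (h := -h) (r := -r) hφ
    (fun y hy => ((hh y hy).neg).congr_deriv (by simp only [Pi.neg_apply]; ring))
    (fun y hy => neg_pos.2 (hr y hy)) (by simpa using hlim.neg) hx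
  simpa using this

lemma hasDerivAt_mul_besselK_sub (ν : ℝ) {u : ℝ → ℝ} {u' z : ℝ} (hu : HasDerivAt u u' z)
    (hz : 0 < z) :
    HasDerivAt (fun x => u x * besselK ν x - x * besselKMoment 1 ν x)
      (u z / z * (u z * besselK ν z - z * besselKMoment 1 ν z) +
        besselK ν z * (u' + (z ^ 2 + ν ^ 2 - u z ^ 2) / z)) z := by
  simp only [besselK_eq_besselKMoment_zero]
  refine ((hu.mul (hasDerivAt_besselKMoment 0 ν hz)).sub
    ((hasDerivAt_id z).mul (hasDerivAt_besselKMoment 1 ν hz))).congr_deriv ?_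
  have := besselKMoment_bessel_equation ν hz
  simp only [id_eq, zero_add, Nat.reduceAdd]
  field_simp
  linear_combination this

lemma hasDerivAt_sqrt_sq_add_sq (a : ℝ) {z : ℝ} (hz : 0 < z) :
    HasDerivAt (fun x => √(a ^ 2 + x ^ 2)) (z / √(a ^ 2 + z ^ 2)) z := by
  have hpos : 0 < a ^ 2 + z ^ 2 := by positivity
  refine (((hasDerivAt_pow 2 z).const_add (a ^ 2)).sqrt hpos.ne').congr_deriv ?_
  field_simp
  ring

lemma add_sqrt_sq_add_sq_pos (a : ℝ) {z : ℝ} (hz : 0 < z) : 0 < a + √(a ^ 2 + z ^ 2) := by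
  have : |a| < √(a ^ 2 + z ^ 2) := by
    rw [Real.lt_sqrt (abs_nonneg a), sq_abs]
    exact lt_add_of_pos_right _ (by positivity)
  linarith [neg_abs_le a]

noncomputable def sqrtBoundPrimitive (a b z : ℝ) : ℝ :=
  √(a ^ 2 + z ^ 2) - a * log (a + √(a ^ 2 + z ^ 2)) + (a + b) * log z

lemma hasDerivAt_sqrtBoundPrimitive (a b : ℝ) {z : ℝ} (hz : 0 < z) :
    HasDerivAt (sqrtBoundPrimitive a b) ((√(a ^ 2 + z ^ 2) + b) / z) z := by
  have hs := hasDerivAt_sqrt_sq_add_sq a hz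
  have has := add_sqrt_sq_add_sq_pos a hz
  refine ((hs.sub (((hs.const_add a).log has.ne').const_mul a)).add
    ((hasDerivAt_log hz.ne').const_mul (a + b))).congr_deriv ?_
  have hs0 : 0 < √(a ^ 2 + z ^ 2) := by positivity
  have hsq := sq_sqrt (by positivity : 0 ≤ a ^ 2 + z ^ 2)
  field_simp
  linear_combination -√(a ^ 2 + z ^ 2) * hsq

lemma log_le_div_add_log_sub_one {x k : ℝ} (hx : 0 < x) (hk : 0 < k) :
    log x ≤ x / k + log k - 1 := by
  have := log_le_sub_one_of_pos (div_pos hx hk)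
  rw [log_div hx.ne' hk.ne'] at this
  linarith

lemma norm_mul_besselK_sub_le (ν : ℝ) {u z : ℝ} (hu : 0 ≤ u) (hz : 1 ≤ z) :
    ‖u * besselK ν z - z * besselKMoment 1 ν z‖ ≤
      (u + z) * (exp (1 - z) * besselKMoment 1 ν 1) := by
  have hz0 : 0 < z := by linarith
  have hK := besselKMoment_pos 0 ν hz0
  have hKK₁ := besselKMoment_le_succ 0 ν hz0
  have hK₁ := besselKMoment_le_exp_sub_mul 1 ν one_pos hz
  rw [besselK_eq_besselKMoment_zero, Real.norm_eq_abs]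
  calc |u * besselKMoment 0 ν z - z * besselKMoment 1 ν z|
      ≤ u * besselKMoment 0 ν z + z * besselKMoment 1 ν z := by
        rw [abs_le]; constructor <;> nlinarith
    _ ≤ (u + z) * besselKMoment 1 ν z := by nlinarith
    _ ≤ (u + z) * (exp (1 - z) * besselKMoment 1 ν 1) := by gcongr

lemma neg_sqrtBoundPrimitive_add_log_le {a b z : ℝ} (ha : 0 ≤ a) (hb : 0 ≤ b) (hz : 1 ≤ z) :
    -sqrtBoundPrimitive a b z + log (√(a ^ 2 + z ^ 2) + b + z) ≤
      (a + 1) * log (2 * (a + 1)) + b / 2 := by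
  unfold sqrtBoundPrimitive
  set s := √(a ^ 2 + z ^ 2)
  have hzs : z ≤ s := Real.le_sqrt_of_sq_le (by nlinarith)
  have hsa : s ≤ a + z := Real.sqrt_le_iff.2 ⟨by positivity, by nlinarith⟩
  set L := 2 * a + b + 2 * z
  have hlog₁ := mul_le_mul_of_nonneg_left
    (log_le_log (by linarith) (by linarith) : log (a + s) ≤ log L) ha
  have hlog₂ : log (s + b + z) ≤ log L := log_le_log (by linarith) (by linarith)
  have hlogL : (a + 1) * log L ≤ L / 2 + (a + 1) * log (2 * (a + 1)) - (a + 1) := by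
    have := mul_le_mul_of_nonneg_left (log_le_div_add_log_sub_one (by positivity : 0 < L)
      (by positivity : 0 < 2 * (a + 1))) (by linarith : 0 ≤ a + 1)
    have hdiv : (a + 1) * (L / (2 * (a + 1))) = L / 2 := by field_simp
    rw [mul_sub, mul_add, hdiv] at this
    linarith
  have hlogz := mul_nonneg (add_nonneg ha hb) (log_nonneg hz)
  linarith

lemma tendsto_exp_neg_sqrtBoundPrimitive_mul (ν : ℝ) {a b : ℝ} (ha : 0 ≤ a) (hb : 0 ≤ b) :
    Tendsto (fun z => exp (-sqrtBoundPrimitive a b z) *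
      ((√(a ^ 2 + z ^ 2) + b) * besselK ν z - z * besselKMoment 1 ν z)) atTop (𝓝 0) := by
  set c := (a + 1) * log (2 * (a + 1)) + b / 2 + 1 with hc
  have hlim : Tendsto (fun z => besselKMoment 1 ν 1 * exp c * exp (-z)) atTop (𝓝 0) := by
    simpa using tendsto_exp_neg_atTop_nhds_zero.const_mul (besselKMoment 1 ν 1 * exp c)
  refine squeeze_zero_norm' ?_ hlim
  filter_upwards [eventually_ge_atTop 1] with z hz
  have hu : 0 < √(a ^ 2 + z ^ 2) + b + z := by positivity
  have hK₁ := (besselKMoment_pos 1 ν one_pos).le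
  rw [norm_mul, norm_of_nonneg (exp_pos _).le]
  calc exp (-sqrtBoundPrimitive a b z) *
        ‖(√(a ^ 2 + z ^ 2) + b) * besselK ν z - z * besselKMoment 1 ν z‖
      ≤ exp (-sqrtBoundPrimitive a b z) *
          ((√(a ^ 2 + z ^ 2) + b + z) * (exp (1 - z) * besselKMoment 1 ν 1)) := by
        gcongr
        exact norm_mul_besselK_sub_le ν (by positivity) hz
    _ = besselKMoment 1 ν 1 *
          exp (-sqrtBoundPrimitive a b z + log (√(a ^ 2 + z ^ 2) + b + z) + (1 - z)) := by
        rw [exp_add, exp_add, exp_log hu]; ring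
    _ ≤ besselKMoment 1 ν 1 * exp (c + -z) := by
        refine mul_le_mul_of_nonneg_left (exp_le_exp.2 ?_) hK₁
        linarith [neg_sqrtBoundPrimitive_add_log_le ha hb hz]
    _ = besselKMoment 1 ν 1 * exp c * exp (-z) := by rw [exp_add]; ring

lemma sqrt_add_mul_besselK_lt {a b ν z : ℝ} (ha : 0 ≤ a) (hb : 0 ≤ b)
    (hdefect : ∀ x, 0 < x →
      0 < x / √(a ^ 2 + x ^ 2) + (x ^ 2 + ν ^ 2 - (√(a ^ 2 + x ^ 2) + b) ^ 2) / x)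
    (hz : 0 < z) :
    (√(a ^ 2 + z ^ 2) + b) * besselK ν z < z * besselKMoment 1 ν z := by
  have := neg_of_hasDerivAt_eq_mul_add_pos (fun x hx => hasDerivAt_sqrtBoundPrimitive a b hx)
    (fun x hx => hasDerivAt_mul_besselK_sub ν ((hasDerivAt_sqrt_sq_add_sq a hx).add_const b) hx)
    (fun x hx => mul_pos (besselK_pos ν hx) (hdefect x hx))
    (tendsto_exp_neg_sqrtBoundPrimitive_mul ν ha hb) hz
  linarith

lemma lt_sqrt_add_mul_besselK {a b ν z : ℝ} (ha : 0 ≤ a) (hb : 0 ≤ b)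
    (hdefect : ∀ x, 0 < x →
      x / √(a ^ 2 + x ^ 2) + (x ^ 2 + ν ^ 2 - (√(a ^ 2 + x ^ 2) + b) ^ 2) / x < 0)
    (hz : 0 < z) :
    z * besselKMoment 1 ν z < (√(a ^ 2 + z ^ 2) + b) * besselK ν z := by
  have := pos_of_hasDerivAt_eq_mul_add_neg (fun x hx => hasDerivAt_sqrtBoundPrimitive a b hx)
    (fun x hx => hasDerivAt_mul_besselK_sub ν ((hasDerivAt_sqrt_sq_add_sq a hx).add_const b) hx)
    (fun x hx => mul_neg_of_pos_of_neg (besselK_pos ν hx) (hdefect x hx))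
    (tendsto_exp_neg_sqrtBoundPrimitive_mul ν ha hb) hz
  linarith

lemma riccati_defect_pos {ν z : ℝ} (hν : 1 / 2 < ν) (hz : 0 < z) :
    0 < z / √((ν - 1 / 2) ^ 2 + z ^ 2) +
      (z ^ 2 + ν ^ 2 - (√((ν - 1 / 2) ^ 2 + z ^ 2) + 1 / 2) ^ 2) / z := by
  set s := √((ν - 1 / 2) ^ 2 + z ^ 2)
  have hs : 0 < s := by positivity
  have hs2 : s ^ 2 = (ν - 1 / 2) ^ 2 + z ^ 2 := sq_sqrt (by positivity)
  have hsa : ν - 1 / 2 < s := by nlinarith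
  have : z / s + (z ^ 2 + ν ^ 2 - (s + 1 / 2) ^ 2) / z =
      (ν - 1 / 2) * (s - (ν - 1 / 2)) / (s * z) := by
    field_simp
    linear_combination (-4 - 4 * s) * hs2
  rw [this]
  apply div_pos (by nlinarith) (by positivity)

lemma riccati_defect_neg (ν : ℝ) {z : ℝ} (hz : 0 < z) :
    z / √((ν - 1) ^ 2 + z ^ 2) + (z ^ 2 + ν ^ 2 - (√((ν - 1) ^ 2 + z ^ 2) + 1) ^ 2) / z < 0 := by
  set s := √((ν - 1) ^ 2 + z ^ 2)
  have hs : 0 < s := by positivity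
  have hs2 : s ^ 2 = (ν - 1) ^ 2 + z ^ 2 := sq_sqrt (by positivity)
  have hsa : ν - 1 < s := by nlinarith
  have : z / s + (z ^ 2 + ν ^ 2 - (s + 1) ^ 2) / z = -(s - (ν - 1)) ^ 2 / (s * z) := by
    field_simp
    linear_combination (-1 - s) * hs2
  rw [this]
  exact div_neg_of_neg_of_pos (by nlinarith) (by positivity)

/-- For z > 0 and ν ≥ 1, with C(K_ν(z)) = -z K_ν'(z)/K_ν(z),
√((ν-1/2)²+z²) + 1/2 < C(K_ν(z)) < √((ν-1)²+z²) + 1. -/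
theorem stmt_7 (z ν : ℝ) (hz : 0 < z) (hν : 1 ≤ ν) :
    Real.sqrt ((ν - 1 / 2) ^ 2 + z ^ 2) + 1 / 2 <
        -z * deriv (besselK ν) z / besselK ν z ∧
      -z * deriv (besselK ν) z / besselK ν z <
        Real.sqrt ((ν - 1) ^ 2 + z ^ 2) + 1 := by
  have hK := besselK_pos ν hz
  rw [(hasDerivAt_besselK ν hz).deriv, neg_mul_neg, lt_div_iff₀ hK, div_lt_iff₀ hK]
  exact ⟨sqrt_add_mul_besselK_lt (by linarith) (by norm_num)
      (fun x hx => riccati_defect_pos (by linarith) hx) hz,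
    lt_sqrt_add_mul_besselK (by linarith) zero_le_one (fun x hx => riccati_defect_neg ν hx) hz⟩
end

section
/- Define for z > 0 and s ∈ (0, 1/3] the function h_z(s) = 2√((1 - s/2)² + z²)(√(1 + (1-s)² z²) - s)(√((1 - 3s/2)² + (1-s)² z²) + s/2) - (1-s)²(s + (1-s)√(1+z²) + √((1-2s)² + (1-s)² z²))(√((1 + s/2)² + z²) - s/2)(√((1-s)² + z²) + s). Then for every fixed z > 0, lim_{s→0⁺} h_z(s) = 0 and the right derivative of h_z at 0 equals 2√(1+z²)(z² - (3/2)√(1+z²) + 2), which is at least 7/8 for all z ≥ 0. -/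
/-!
Every radicand of `h_z` is a quadratic polynomial in `s` taking the value `1 + z²` at `s = 0`, so
`h_z` is differentiable at `0` and both of its products equal `2 (1 + z²)^{3/2}` there. The product
rule gives the derivative; with `u = √(1 + z²) ≥ 1` it equals `2u³ - 3u² + 2u`, and
`2u³ - 3u² + 2u - 1 = (u - 1)(2u² - u + 1) ≥ 0`.
-/

open Real

noncomputable def helicalComparison (z s : ℝ) : ℝ :=
  2 * √((1 - s / 2) ^ 2 + z ^ 2) * (√(1 + (1 - s) ^ 2 * z ^ 2) - s) *
      (√((1 - 3 * s / 2) ^ 2 + (1 - s) ^ 2 * z ^ 2) + s / 2) -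
    (1 - s) ^ 2 * (s + (1 - s) * √(1 + z ^ 2) + √((1 - 2 * s) ^ 2 + (1 - s) ^ 2 * z ^ 2)) *
      (√((1 + s / 2) ^ 2 + z ^ 2) - s / 2) * (√((1 - s) ^ 2 + z ^ 2) + s)

theorem helicalComparison_zero (z : ℝ) : helicalComparison z 0 = 0 := by
  simp only [helicalComparison]; norm_num; ring

theorem hasDerivAt_sqrt_radicand {f : ℝ → ℝ} (a b z : ℝ)
    (hf : ∀ s, f s = (1 - a * s) ^ 2 + (1 - b * s) ^ 2 * z ^ 2) :
    HasDerivAt (fun s => √(f s)) (-(a + b * z ^ 2) / √(1 + z ^ 2)) 0 := by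
  have hp : HasDerivAt (fun s => (1 - a * s) ^ 2 + (1 - b * s) ^ 2 * z ^ 2)
      (-2 * (a + b * z ^ 2)) 0 := by
    have hs : HasDerivAt (fun s : ℝ => s) 1 0 := hasDerivAt_id' 0
    exact ((((hs.const_mul a).const_sub 1).pow 2).add
      ((((hs.const_mul b).const_sub 1).pow 2).mul_const (z ^ 2))).congr_deriv (by ring)
  have hp0 : (1 - a * 0) ^ 2 + (1 - b * 0) ^ 2 * z ^ 2 = 1 + z ^ 2 := by ring
  have hsqrt := hp.sqrt (by rw [hp0]; positivity)
  rw [hp0] at hsqrt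
  rw [funext hf]
  refine hsqrt.congr_deriv ?_
  have hu : √(1 + z ^ 2) ≠ 0 := (sqrt_pos.mpr (by positivity)).ne'
  field_simp

theorem hasDerivAt_helicalComparison (z : ℝ) :
    HasDerivAt (helicalComparison z)
      (2 * √(1 + z ^ 2) * (z ^ 2 - 3 / 2 * √(1 + z ^ 2) + 2)) 0 := by
  have hs : HasDerivAt (fun s : ℝ => s) 1 0 := hasDerivAt_id' 0
  have hA := hasDerivAt_sqrt_radicand (f := fun s => (1 - s / 2) ^ 2 + z ^ 2) (1 / 2) 0 z
    fun s => by ring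
  have hB := hasDerivAt_sqrt_radicand (f := fun s => 1 + (1 - s) ^ 2 * z ^ 2) 0 1 z
    fun s => by ring
  have hC := hasDerivAt_sqrt_radicand
    (f := fun s => (1 - 3 * s / 2) ^ 2 + (1 - s) ^ 2 * z ^ 2) (3 / 2) 1 z fun s => by ring
  have hE := hasDerivAt_sqrt_radicand
    (f := fun s => (1 - 2 * s) ^ 2 + (1 - s) ^ 2 * z ^ 2) 2 1 z fun s => by ring
  have hF := hasDerivAt_sqrt_radicand (f := fun s => (1 + s / 2) ^ 2 + z ^ 2) (-1 / 2) 0 z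
    fun s => by ring
  have hG := hasDerivAt_sqrt_radicand (f := fun s => (1 - s) ^ 2 + z ^ 2) 1 0 z
    fun s => by ring
  have hP := ((hA.const_mul 2).mul (hB.sub hs)).mul (hC.add (hs.div_const 2))
  have hQ := ((((hs.const_sub 1).pow 2).mul
    ((hs.add ((hs.const_sub 1).mul_const √(1 + z ^ 2))).add hE)).mul
    (hF.sub (hs.div_const 2))).mul (hG.add hs)
  refine (hP.sub hQ).congr_deriv ?_
  have hu : 0 < √(1 + z ^ 2) := sqrt_pos.mpr (by positivity)
  have hu2 : √(1 + z ^ 2) ^ 2 = 1 + z ^ 2 := sq_sqrt (by positivity)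
  norm_num
  generalize √(1 + z ^ 2) = u at hu hu2 ⊢
  rw [show z ^ 2 = u ^ 2 - 1 by linarith]
  field_simp
  ring

theorem one_le_two_mul_sqrt_one_add_sq_mul (w : ℝ) :
    1 ≤ 2 * √(1 + w ^ 2) * (w ^ 2 - 3 / 2 * √(1 + w ^ 2) + 2) := by
  have hu2 : √(1 + w ^ 2) ^ 2 = 1 + w ^ 2 := sq_sqrt (by positivity)
  have hu1 : 1 ≤ √(1 + w ^ 2) := one_le_sqrt.mpr (by nlinarith)
  generalize √(1 + w ^ 2) = u at hu1 hu2 ⊢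
  rw [show w ^ 2 = u ^ 2 - 1 by linarith]
  nlinarith [mul_nonneg (sub_nonneg.mpr hu1) (sq_nonneg (u - 1))]

theorem stmt_12_general (z : ℝ) (H : ℝ → ℝ → ℝ)
    (hH : ∀ z s : ℝ, H z s =
      2 * Real.sqrt ((1 - s / 2) ^ 2 + z ^ 2) *
          (Real.sqrt (1 + (1 - s) ^ 2 * z ^ 2) - s) *
          (Real.sqrt ((1 - 3 * s / 2) ^ 2 + (1 - s) ^ 2 * z ^ 2) + s / 2) -
        (1 - s) ^ 2 *
          (s + (1 - s) * Real.sqrt (1 + z ^ 2) +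
            Real.sqrt ((1 - 2 * s) ^ 2 + (1 - s) ^ 2 * z ^ 2)) *
          (Real.sqrt ((1 + s / 2) ^ 2 + z ^ 2) - s / 2) *
          (Real.sqrt ((1 - s) ^ 2 + z ^ 2) + s)) :
    Filter.Tendsto (H z) (nhdsWithin 0 (Set.Ioi 0)) (nhds 0) ∧
    HasDerivWithinAt (H z)
      (2 * Real.sqrt (1 + z ^ 2) * (z ^ 2 - 3 / 2 * Real.sqrt (1 + z ^ 2) + 2))
      (Set.Ioi 0) 0 ∧
    ∀ w : ℝ, 0 ≤ w →
      7 / 8 ≤ 2 * Real.sqrt (1 + w ^ 2) *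
        (w ^ 2 - 3 / 2 * Real.sqrt (1 + w ^ 2) + 2) := by
  have hHz : H z = helicalComparison z := funext (hH z)
  have hderiv := hasDerivAt_helicalComparison z
  refine ⟨?_, hHz ▸ hderiv.hasDerivWithinAt, fun w _ =>
    (by norm_num : (7 : ℝ) / 8 ≤ 1).trans (one_le_two_mul_sqrt_one_add_sq_mul w)⟩
  have hcont := (hderiv.continuousAt.continuousWithinAt (s := Set.Ioi 0)).tendsto
  rwa [helicalComparison_zero, ← hHz] at hcont

/-- For fixed z > 0, the normalized comparison function h_z
satisfies lim_{s→0⁺} h_z(s) = 0 and its right derivative at 0 equals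
2√(1+z²)(z² - (3/2)√(1+z²) + 2), which is ≥ 7/8 for all z ≥ 0. -/
theorem stmt_12 (z : ℝ) (hz : 0 < z) (H : ℝ → ℝ → ℝ)
    (hH : ∀ z s : ℝ, H z s =
      2 * Real.sqrt ((1 - s / 2) ^ 2 + z ^ 2) *
          (Real.sqrt (1 + (1 - s) ^ 2 * z ^ 2) - s) *
          (Real.sqrt ((1 - 3 * s / 2) ^ 2 + (1 - s) ^ 2 * z ^ 2) + s / 2) -
        (1 - s) ^ 2 *
          (s + (1 - s) * Real.sqrt (1 + z ^ 2) +
            Real.sqrt ((1 - 2 * s) ^ 2 + (1 - s) ^ 2 * z ^ 2)) *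
          (Real.sqrt ((1 + s / 2) ^ 2 + z ^ 2) - s / 2) *
          (Real.sqrt ((1 - s) ^ 2 + z ^ 2) + s)) :
    Filter.Tendsto (H z) (nhdsWithin 0 (Set.Ioi 0)) (nhds 0) ∧
    HasDerivWithinAt (H z)
      (2 * Real.sqrt (1 + z ^ 2) * (z ^ 2 - 3 / 2 * Real.sqrt (1 + z ^ 2) + 2))
      (Set.Ioi 0) 0 ∧
    ∀ w : ℝ, 0 ≤ w →
      7 / 8 ≤ 2 * Real.sqrt (1 + w ^ 2) *
        (w ^ 2 - 3 / 2 * Real.sqrt (1 + w ^ 2) + 2) :=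
  stmt_12_general z H hH
end

section
/- Define for z ≥ 1 and s ∈ (0, 1/3] the function g_z(s) = 2√((1/z²)(1 - s/2)² + 1)(√(1/z² + (1-s)²) - s/z)(√((1/z²)(1 - 3s/2)² + (1-s)²) + s/(2z)) - (1-s)²(s/z + (1-s)√(1 + 1/z²) + √((1/z²)(1-2s)² + (1-s)²))(√((1/z²)(1 + s/2)² + 1) - s/(2z))(√((1/z²)(1-s)² + 1) + s/z). Then lim_{s→0⁺} g_z(s) = 0 and the right derivative of g_z at 0 equals 2√(1 + 1/z²)(2/z² - (3/(2z))√(1/z² + 1) + 1), which is at least 2(√2 - 3/4)² for all z ≥ 1. -/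
/-!
Write `t = 1/z`. Every square root in `g_z(s)` has the shape `√(t²(1+cs)² + (1+ds)²)`, which
equals `a = √(t²+1)` at `s = 0`; hence `g_z(0) = 0`, and the chain rule gives the slope
`2a(2t²+1) - 3ta²` at `0`. The limit is continuity of a function differentiable at `0`. The slope
is at least `1` for every real `t`, whereas `2(√2 - 3/4)² = 41/8 - 3√2 < 1`.
-/

noncomputable def sqrtQuad (t c d s : ℝ) : ℝ := √(t ^ 2 * (1 + c * s) ^ 2 + (1 + d * s) ^ 2)

/-- `g_z(s) = comparisonFun (1/z) s`. -/
noncomputable def comparisonFun (t s : ℝ) : ℝ :=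
  2 * sqrtQuad t (-1/2) 0 s * (sqrtQuad t 0 (-1) s - s * t) *
      (sqrtQuad t (-3/2) (-1) s + s * t / 2) -
    (1 - s) ^ 2 * (s * t + (1 - s) * √(t ^ 2 + 1) + sqrtQuad t (-2) (-1) s) *
      (sqrtQuad t (1/2) 0 s - s * t / 2) * (sqrtQuad t (-1) 0 s + s * t)

noncomputable def slopeAtZero (t : ℝ) : ℝ :=
  2 * √(t ^ 2 + 1) * (2 * t ^ 2 + 1) - 3 * t * (t ^ 2 + 1)

@[simp]
lemma sqrtQuad_zero (t c d : ℝ) : sqrtQuad t c d 0 = √(t ^ 2 + 1) := by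
  simp [sqrtQuad]

lemma hasDerivAt_sqrtQuad (t c d : ℝ) :
    HasDerivAt (sqrtQuad t c d) ((t ^ 2 * c + d) / √(t ^ 2 + 1)) 0 := by
  have hlin (e : ℝ) : HasDerivAt (fun s : ℝ => 1 + e * s) e 0 := by
    simpa using ((hasDerivAt_id (0 : ℝ)).const_mul e).const_add 1
  have hpos : t ^ 2 * (1 + c * 0) ^ 2 + (1 + d * 0) ^ 2 ≠ 0 := by
    simp only [mul_zero, add_zero, one_pow, mul_one, ne_eq]
    positivity
  refine (((((hlin c).pow 2).const_mul (t ^ 2)).add ((hlin d).pow 2)).sqrt hpos).congr_deriv ?_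
  simp only [Nat.cast_ofNat, mul_zero, add_zero, Nat.add_one_sub_one, one_pow, mul_one,
    Pi.pow_apply, Pi.add_apply]
  field_simp

lemma comparisonFun_zero (t : ℝ) : comparisonFun t 0 = 0 := by
  simp [comparisonFun]
  ring

lemma hasDerivAt_comparisonFun (t : ℝ) : HasDerivAt (comparisonFun t) (slopeAtZero t) 0 := by
  have hid : HasDerivAt (fun s : ℝ => s) 1 0 := hasDerivAt_id 0
  have hsub : HasDerivAt (fun s : ℝ => 1 - s) (-1) 0 := by simpa using hid.const_sub 1
  have hA := hasDerivAt_sqrtQuad t (-1/2) 0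
  have hB := (hasDerivAt_sqrtQuad t 0 (-1)).sub (hid.mul_const t)
  have hC := (hasDerivAt_sqrtQuad t (-3/2) (-1)).add ((hid.mul_const t).div_const 2)
  have hP := ((hid.mul_const t).add (hsub.mul_const √(t ^ 2 + 1))).add
    (hasDerivAt_sqrtQuad t (-2) (-1))
  have hQ := (hasDerivAt_sqrtQuad t (1/2) 0).sub ((hid.mul_const t).div_const 2)
  have hR := (hasDerivAt_sqrtQuad t (-1) 0).add (hid.mul_const t)
  have h := (((hA.const_mul 2).mul hB).mul hC).sub ((((hsub.pow 2).mul hP).mul hQ).mul hR)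
  refine h.congr_deriv ?_
  have ha2 : √(t ^ 2 + 1) ^ 2 = t ^ 2 + 1 := Real.sq_sqrt (by positivity)
  simp only [Pi.add_apply, Pi.sub_apply, Pi.mul_apply, Pi.pow_apply, sqrtQuad_zero, slopeAtZero]
  field_simp
  linear_combination (10 * √(t ^ 2 + 1) ^ 2 - 6 * t * √(t ^ 2 + 1)) * ha2

lemma one_le_slopeAtZero (t : ℝ) : 1 ≤ slopeAtZero t := by
  have ha2 : √(t ^ 2 + 1) ^ 2 = t ^ 2 + 1 := Real.sq_sqrt (by positivity)
  have ha : 0 ≤ √(t ^ 2 + 1) := Real.sqrt_nonneg _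
  unfold slopeAtZero
  nlinarith [sq_nonneg (√(t ^ 2 + 1) - 1), sq_nonneg (t - 1/2), sq_nonneg (√(t ^ 2 + 1) - t),
    sq_nonneg (t * √(t ^ 2 + 1) - 1)]

lemma two_mul_sq_sqrt_two_sub_le_one : 2 * (√2 - 3 / 4) ^ 2 ≤ 1 := by
  have h2 : √2 ^ 2 = 2 := Real.sq_sqrt (by norm_num)
  nlinarith [Real.sqrt_nonneg 2]

lemma slopeAtZero_inv (z : ℝ) :
    slopeAtZero z⁻¹ =
      2 * √(1 + 1 / z ^ 2) * (2 / z ^ 2 - 3 / (2 * z) * √(1 / z ^ 2 + 1) + 1) := by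
  rw [slopeAtZero, add_comm 1, one_div, inv_pow]
  have ha2 : √((z ^ 2)⁻¹ + 1) ^ 2 = (z ^ 2)⁻¹ + 1 := Real.sq_sqrt (by positivity)
  linear_combination (3 * z⁻¹) * ha2

theorem stmt_14_general (z : ℝ) (G : ℝ → ℝ → ℝ)
    (hG : ∀ z s : ℝ, G z s =
      2 * Real.sqrt ((1 / z ^ 2) * (1 - s / 2) ^ 2 + 1) *
          (Real.sqrt (1 / z ^ 2 + (1 - s) ^ 2) - s / z) *
          (Real.sqrt ((1 / z ^ 2) * (1 - 3 * s / 2) ^ 2 + (1 - s) ^ 2) +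
            s / (2 * z)) -
        (1 - s) ^ 2 *
          (s / z + (1 - s) * Real.sqrt (1 + 1 / z ^ 2) +
            Real.sqrt ((1 / z ^ 2) * (1 - 2 * s) ^ 2 + (1 - s) ^ 2)) *
          (Real.sqrt ((1 / z ^ 2) * (1 + s / 2) ^ 2 + 1) - s / (2 * z)) *
          (Real.sqrt ((1 / z ^ 2) * (1 - s) ^ 2 + 1) + s / z)) :
    Filter.Tendsto (G z) (nhdsWithin 0 (Set.Ioi 0)) (nhds 0) ∧
    HasDerivWithinAt (G z)
      (2 * Real.sqrt (1 + 1 / z ^ 2) *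
        (2 / z ^ 2 - 3 / (2 * z) * Real.sqrt (1 / z ^ 2 + 1) + 1))
      (Set.Ioi 0) 0 ∧
    ∀ w : ℝ, 1 ≤ w →
      2 * (Real.sqrt 2 - 3 / 4) ^ 2 ≤
        2 * Real.sqrt (1 + 1 / w ^ 2) *
          (2 / w ^ 2 - 3 / (2 * w) * Real.sqrt (1 / w ^ 2 + 1) + 1) := by
  have hGz : G z = comparisonFun z⁻¹ := funext fun s => by
    rw [hG, comparisonFun]
    simp only [sqrtQuad]
    ring_nf
  have hderiv := hasDerivAt_comparisonFun z⁻¹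
  refine ⟨?_, ?_, fun w _ => ?_⟩
  · have hcont := hderiv.continuousAt.tendsto
    rw [comparisonFun_zero] at hcont
    exact hGz ▸ hcont.mono_left nhdsWithin_le_nhds
  · rw [hGz, ← slopeAtZero_inv]
    exact hderiv.hasDerivWithinAt
  · rw [← slopeAtZero_inv]
    exact two_mul_sq_sqrt_two_sub_le_one.trans (one_le_slopeAtZero w⁻¹)

/-- For fixed z ≥ 1, the large-z normalized comparison function
g_z satisfies lim_{s→0⁺} g_z(s) = 0 and its right derivative at 0 equals
2√(1+1/z²)(2/z² - (3/(2z))√(1/z²+1) + 1), which is ≥ 2(√2 - 3/4)² for z ≥ 1. -/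
theorem stmt_14 (z : ℝ) (hz : 1 ≤ z) (G : ℝ → ℝ → ℝ)
    (hG : ∀ z s : ℝ, G z s =
      2 * Real.sqrt ((1 / z ^ 2) * (1 - s / 2) ^ 2 + 1) *
          (Real.sqrt (1 / z ^ 2 + (1 - s) ^ 2) - s / z) *
          (Real.sqrt ((1 / z ^ 2) * (1 - 3 * s / 2) ^ 2 + (1 - s) ^ 2) +
            s / (2 * z)) -
        (1 - s) ^ 2 *
          (s / z + (1 - s) * Real.sqrt (1 + 1 / z ^ 2) +
            Real.sqrt ((1 / z ^ 2) * (1 - 2 * s) ^ 2 + (1 - s) ^ 2)) *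
          (Real.sqrt ((1 / z ^ 2) * (1 + s / 2) ^ 2 + 1) - s / (2 * z)) *
          (Real.sqrt ((1 / z ^ 2) * (1 - s) ^ 2 + 1) + s / z)) :
    Filter.Tendsto (G z) (nhdsWithin 0 (Set.Ioi 0)) (nhds 0) ∧
    HasDerivWithinAt (G z)
      (2 * Real.sqrt (1 + 1 / z ^ 2) *
        (2 / z ^ 2 - 3 / (2 * z) * Real.sqrt (1 / z ^ 2 + 1) + 1))
      (Set.Ioi 0) 0 ∧
    ∀ w : ℝ, 1 ≤ w →
      2 * (Real.sqrt 2 - 3 / 4) ^ 2 ≤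
        2 * Real.sqrt (1 + 1 / w ^ 2) *
          (2 / w ^ 2 - 3 / (2 * w) * Real.sqrt (1 / w ^ 2 + 1) + 1) :=
  stmt_14_general z G hG
end
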